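/- arXiv:2112.03848 — 3 statements merged into one kernel-verified Lean document; each statement's English description precedes it below -/
import Mathlib

section
/- (Bour's theorem, type I) Let x, z, w be smooth functions on an interval I with x(u)² − λ² > 0 and x'(u) ≠ 0 for all u, and let a, b be smooth functions satisfying a(u)² − b(u)² = (x(u)²(z'(u)²−w'(u)²) − λ²(x'(u)²+z'(u)²)) / (x(u)²x'(u)²). Then the change of variable v̄ = v − ∫ λw'(u)/(x(u)²−λ²) du transforms the induced metric (x'²+z'²−w'²)du² − 2λw' du dv + (x²−λ²)dv² of the type I helicoidal surface into the metric (x'²+z'²−w'² − λ²w'²/(x²−λ²))du² + (x²−λ²)dv̄², and this equals the induced metric n'² + s'² − r'² du² + n² dv̄² of the rotational surface with n(u) = √(x(u)²−λ²), s'(u) = a(u)x(u)x'(u)/√(x(u)²−λ²), r'(u) = b(u)x(u)x'(u)/√(x(u)²−λ²). In particular the two surfaces are isometric. -/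
open Real

/-- Bour's theorem for type I helicoidal surfaces in Minkowski 4-space:
the substitution `v̄ = v − F(u)` (where `F' = λw'/(x²−λ²)`) transforms the induced
metric of the helicoidal surface into that of the associated rotational surface. -/
theorem stmt_3 (x z w a b n s r F : ℝ → ℝ) (lam : ℝ) (hlam : 0 < lam)
    (hx : ContDiff ℝ (⊤ : ℕ∞) x) (hz : ContDiff ℝ (⊤ : ℕ∞) z) (hw : ContDiff ℝ (⊤ : ℕ∞) w)
    (ha : ContDiff ℝ (⊤ : ℕ∞) a) (hb : ContDiff ℝ (⊤ : ℕ∞) b)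
    (hxl : ∀ u, (x u)^2 - lam^2 > 0) (hx' : ∀ u, deriv x u ≠ 0)
    (hab : ∀ u, (a u)^2 - (b u)^2
      = ((x u)^2 * ((deriv z u)^2 - (deriv w u)^2)
          - lam^2 * ((deriv x u)^2 + (deriv z u)^2)) / ((x u)^2 * (deriv x u)^2))
    (hF : ∀ u, deriv F u = lam * deriv w u / ((x u)^2 - lam^2))
    (hn : ∀ u, n u = Real.sqrt ((x u)^2 - lam^2))
    (hs : ∀ u, deriv s u = a u * x u * deriv x u / Real.sqrt ((x u)^2 - lam^2))
    (hr : ∀ u, deriv r u = b u * x u * deriv x u / Real.sqrt ((x u)^2 - lam^2)) :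
    ∀ u du dv,
      (((deriv x u)^2 + (deriv z u)^2 - (deriv w u)^2) * du^2
        - 2 * lam * deriv w u * du * dv + ((x u)^2 - lam^2) * dv^2
        = ((deriv x u)^2 + (deriv z u)^2 - (deriv w u)^2
            - lam^2 * (deriv w u)^2 / ((x u)^2 - lam^2)) * du^2
          + ((x u)^2 - lam^2) * (dv - deriv F u * du)^2)
      ∧
      (((deriv x u)^2 + (deriv z u)^2 - (deriv w u)^2) * du^2
        - 2 * lam * deriv w u * du * dv + ((x u)^2 - lam^2) * dv^2
        = ((deriv n u)^2 + (deriv s u)^2 - (deriv r u)^2) * du^2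
          + (n u)^2 * (dv - deriv F u * du)^2) := by
  intro u du dv
  have hD : (x u)^2 - lam^2 > 0 := hxl u
  have hDne : (x u)^2 - lam^2 ≠ 0 := ne_of_gt hD
  have hsq : Real.sqrt ((x u)^2 - lam^2) > 0 := Real.sqrt_pos.mpr hD
  have hsqne : Real.sqrt ((x u)^2 - lam^2) ≠ 0 := ne_of_gt hsq
  have hsqsq : Real.sqrt ((x u)^2 - lam^2) ^ 2 = (x u)^2 - lam^2 :=
    Real.sq_sqrt hD.le
  have hxd : HasDerivAt x (deriv x u) u :=
    ((hx.differentiable (by simp)) u).hasDerivAt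
  have hf : HasDerivAt (fun t => (x t)^2 - lam^2)
      (2 * x u ^ 1 * deriv x u) u := by
    simpa using (hxd.pow 2).sub_const (lam^2)
  have hnd : HasDerivAt n (2 * x u ^ 1 * deriv x u / (2 * Real.sqrt ((x u)^2 - lam^2))) u := by
    have := hf.sqrt hDne
    have he : n = fun t => Real.sqrt ((x t)^2 - lam^2) := funext hn
    rw [he]; exact this
  have hderivn : deriv n u = x u * deriv x u / Real.sqrt ((x u)^2 - lam^2) := by
    rw [hnd.deriv]; field_simp
  constructor
  · rw [hF u]; field_simp; ring
  · rw [hF u, hderivn, hs u, hr u, hn u]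
    have hxne : x u ≠ 0 := by
      intro h; nlinarith [hxl u, sq_nonneg (lam)]
    have key : (a u)^2 - (b u)^2
        = ((x u)^2 * ((deriv z u)^2 - (deriv w u)^2)
          - lam^2 * ((deriv x u)^2 + (deriv z u)^2)) / ((x u)^2 * (deriv x u)^2) := hab u
    have hxx : (x u)^2 * (deriv x u)^2 ≠ 0 := mul_ne_zero (pow_ne_zero 2 hxne) (pow_ne_zero 2 (hx' u))
    rw [eq_div_iff hxx] at key
    rw [div_pow, div_pow, div_pow, hsqsq]
    field_simp
    linear_combination (-du^2) * key
end

section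
/- Let λ > 0 and let w, x be smooth functions on an interval with x(u)² − λ² > 0 and x'(u) ≠ 0. If x(u)w'(u)/(λx'(u)) = −cot(∫ λw'(u)/(x(u)²−λ²) du) holds on the interval (where the cotangent is defined), then differentiation yields the identity λ²(x x' w'' + w'(2x'² − x x'')) + x²(w'(w'² − x'²) + x(x''w' − x'w'')) = 0. -/
open Real

/-- Differentiating the Gauss-map relation
`x w'/(λ x') = −cot(∫ λw'/(x²−λ²) du)` yields the minimality identity
for the type I helicoidal surface. -/
theorem stmt_6 (x w F : ℝ → ℝ) (lam : ℝ) (hlam : 0 < lam)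
    (hx : ContDiff ℝ (⊤ : ℕ∞) x) (hw : ContDiff ℝ (⊤ : ℕ∞) w) (hF : ContDiff ℝ (⊤ : ℕ∞) F)
    (hxl : ∀ u, (x u)^2 - lam^2 > 0) (hx' : ∀ u, deriv x u ≠ 0)
    (hF' : ∀ u, deriv F u = lam * deriv w u / ((x u)^2 - lam^2))
    (hsin : ∀ u, Real.sin (F u) ≠ 0)
    (heq : ∀ u, x u * deriv w u / (lam * deriv x u)
      = -(Real.cos (F u) / Real.sin (F u))) :
    ∀ u,
      lam^2 * (x u * deriv x u * deriv (deriv w) u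
          + deriv w u * (2 * (deriv x u)^2 - x u * deriv (deriv x) u))
        + (x u)^2 * (deriv w u * ((deriv w u)^2 - (deriv x u)^2)
          + x u * (deriv (deriv x) u * deriv w u - deriv x u * deriv (deriv w) u))
      = 0 := by
  have hlam0 : lam ≠ 0 := ne_of_gt hlam
  have hxd : Differentiable ℝ x := hx.differentiable (by simp)
  have hwd : Differentiable ℝ w := hw.differentiable (by simp)
  have hFd : Differentiable ℝ F := hF.differentiable (by simp)
  have hx'd : Differentiable ℝ (deriv x) :=
    ((contDiff_infty_iff_deriv.mp (hx.of_le (by simp))).2).differentiable (by simp)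
  have hw'd : Differentiable ℝ (deriv w) :=
    ((contDiff_infty_iff_deriv.mp (hw.of_le (by simp))).2).differentiable (by simp)
  have hrel : ∀ u, x u * deriv w u * Real.sin (F u)
      + lam * deriv x u * Real.cos (F u) = 0 := by
    intro u
    have h := heq u
    have h1 : lam * deriv x u ≠ 0 := mul_ne_zero hlam0 (hx' u)
    have hs := hsin u
    have hx'u := hx' u
    field_simp at h
    linear_combination h
  intro u
  -- derivative of the identically-zero function g
  have hsinD : HasDerivAt (fun v => Real.sin (F v))
      (Real.cos (F u) * deriv F u) u :=
    (Real.hasDerivAt_sin (F u)).comp u (hFd u).hasDerivAt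
  have hcosD : HasDerivAt (fun v => Real.cos (F v))
      (-Real.sin (F u) * deriv F u) u :=
    (Real.hasDerivAt_cos (F u)).comp u (hFd u).hasDerivAt
  have h1 : HasDerivAt (fun v => x v * deriv w v * Real.sin (F v))
      ((deriv x u * deriv w u + x u * deriv (deriv w) u) * Real.sin (F u)
        + x u * deriv w u * (Real.cos (F u) * deriv F u)) u :=
    (((hxd u).hasDerivAt.mul (hw'd u).hasDerivAt)).mul hsinD
  have h2 : HasDerivAt (fun v => lam * deriv x v * Real.cos (F v))
      ((0 * deriv x u + lam * deriv (deriv x) u) * Real.cos (F u)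
        + lam * deriv x u * (-Real.sin (F u) * deriv F u)) u :=
    ((hasDerivAt_const u lam).mul (hx'd u).hasDerivAt).mul hcosD
  have hg : HasDerivAt (fun v => x v * deriv w v * Real.sin (F v)
      + lam * deriv x v * Real.cos (F v))
      (((deriv x u * deriv w u + x u * deriv (deriv w) u) * Real.sin (F u)
        + x u * deriv w u * (Real.cos (F u) * deriv F u))
       + ((0 * deriv x u + lam * deriv (deriv x) u) * Real.cos (F u)
        + lam * deriv x u * (-Real.sin (F u) * deriv F u))) u := h1.add h2
  have hg0 : HasDerivAt (fun v => x v * deriv w v * Real.sin (F v)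
      + lam * deriv x v * Real.cos (F v)) 0 u := by
    have : (fun v => x v * deriv w v * Real.sin (F v)
        + lam * deriv x v * Real.cos (F v)) = fun _ => (0:ℝ) :=
      funext hrel
    rw [this]
    exact hasDerivAt_const u 0
  have hD : ((deriv x u * deriv w u + x u * deriv (deriv w) u) * Real.sin (F u)
        + x u * deriv w u * (Real.cos (F u) * deriv F u))
       + ((0 * deriv x u + lam * deriv (deriv x) u) * Real.cos (F u)
        + lam * deriv x u * (-Real.sin (F u) * deriv F u)) = 0 :=
    hg.unique hg0
  -- now pure algebra
  have hxl2 : (x u)^2 - lam^2 ≠ 0 := ne_of_gt (hxl u)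
  have hs := hsin u
  have hx'u := hx' u
  have hF'u : deriv F u * ((x u)^2 - lam^2) = lam * deriv w u := by
    rw [hF' u]; field_simp
  have hc : Real.cos (F u) * (lam * deriv x u)
      = -(x u * deriv w u * Real.sin (F u)) := by
    linear_combination hrel u
  -- eliminate cos and F' from hD
  have key : Real.sin (F u) *
      (lam^2 * (x u * deriv x u * deriv (deriv w) u
          + deriv w u * (2 * (deriv x u)^2 - x u * deriv (deriv x) u))
        + (x u)^2 * (deriv w u * ((deriv w u)^2 - (deriv x u)^2)
          + x u * (deriv (deriv x) u * deriv w u - deriv x u * deriv (deriv w) u)))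
      = 0 := by
    have hcos : Real.cos (F u) = -(x u * deriv w u * Real.sin (F u)) / (lam * deriv x u) := by
      field_simp at hc ⊢
      linear_combination hc
    have hFu : deriv F u = lam * deriv w u / ((x u)^2 - lam^2) := hF' u
    rw [hcos, hFu] at hD
    field_simp at hD
    nlinarith [hD, sq_nonneg (Real.sin (F u))]
  have := mul_eq_zero.mp key
  rcases this with h | h
  · exact absurd h hs
  · exact h
end

section
/- Let λ > 0 and w, x smooth with w(u) ≠ 0, w'(u) ≠ 0. If −x'(u)w(u)/(λw'(u)) = coth(∫ λx'(u)/(λ²+w(u)²) du) holds on an interval (where coth is defined and nonzero), then differentiation yields λ(x'w'²(2λ²+w²) − w²x'³ + w(λ²+w²)(x''w' − x'w'')) = 0, i.e. x'w'²(2λ²+w²) − w²x'³ + w(λ²+w²)(x''w' − x'w'') = 0. -/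
open Real

/-- Differentiating the Gauss-map relation
`−x'w/(λw') = coth(∫ λx'/(λ²+w²) du)` yields the minimality identity
for the type II helicoidal surface. -/
theorem stmt_7 (x w F : ℝ → ℝ) (lam : ℝ) (hlam : 0 < lam)
    (hx : ContDiff ℝ (⊤ : ℕ∞) x) (hw : ContDiff ℝ (⊤ : ℕ∞) w) (hF : ContDiff ℝ (⊤ : ℕ∞) F)
    (hw0 : ∀ u, w u ≠ 0) (hw' : ∀ u, deriv w u ≠ 0)
    (hF' : ∀ u, deriv F u = lam * deriv x u / (lam^2 + (w u)^2))
    (hsinh : ∀ u, Real.sinh (F u) ≠ 0) (hcosh : ∀ u, Real.cosh (F u) ≠ 0)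
    (heq : ∀ u, -(deriv x u * w u) / (lam * deriv w u)
      = Real.cosh (F u) / Real.sinh (F u)) :
    ∀ u,
      deriv x u * (deriv w u)^2 * (2 * lam^2 + (w u)^2)
        - (w u)^2 * (deriv x u)^3
        + w u * (lam^2 + (w u)^2)
          * (deriv (deriv x) u * deriv w u - deriv x u * deriv (deriv w) u)
      = 0 := by
  intro u
  have hlam0 : lam ≠ 0 := hlam.ne'
  have hx1 := contDiff_infty_iff_deriv.mp (hx.of_le (by simp))
  have hw1 := contDiff_infty_iff_deriv.mp (hw.of_le (by simp))
  have hF1 := contDiff_infty_iff_deriv.mp (hF.of_le (by simp))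
  have hx2 := contDiff_infty_iff_deriv.mp hx1.2
  have hw2 := contDiff_infty_iff_deriv.mp hw1.2
  have hxd : HasDerivAt (deriv x) (deriv (deriv x) u) u := (hx2.1 u).hasDerivAt
  have hwd : HasDerivAt w (deriv w u) u := (hw1.1 u).hasDerivAt
  have hw'd : HasDerivAt (deriv w) (deriv (deriv w) u) u := (hw2.1 u).hasDerivAt
  have hFd : HasDerivAt F (deriv F u) u := (hF1.1 u).hasDerivAt
  have hden : lam * deriv w u ≠ 0 := mul_ne_zero hlam0 (hw' u)
  have hg : HasDerivAt (fun v => -(deriv x v * w v) / (lam * deriv w v))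
      ((-(deriv (deriv x) u * w u + deriv x u * deriv w u) * (lam * deriv w u)
        - -(deriv x u * w u) * (0 * deriv w u + lam * deriv (deriv w) u))
        / (lam * deriv w u)^2) u :=
    ((hxd.mul hwd).neg).div ((hasDerivAt_const u lam).mul hw'd) hden
  have hcoshd : HasDerivAt (fun v => Real.cosh (F v))
      (Real.sinh (F u) * deriv F u) u := (Real.hasDerivAt_cosh (F u)).comp u hFd
  have hsinhd : HasDerivAt (fun v => Real.sinh (F v))
      (Real.cosh (F u) * deriv F u) u := (Real.hasDerivAt_sinh (F u)).comp u hFd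
  have hh : HasDerivAt (fun v => -(deriv x v * w v) / (lam * deriv w v))
      ((Real.sinh (F u) * deriv F u * Real.sinh (F u)
        - Real.cosh (F u) * (Real.cosh (F u) * deriv F u)) / (Real.sinh (F u))^2)
      u := by
    have := hcoshd.div hsinhd (hsinh u)
    have hfun : (fun v => -(deriv x v * w v) / (lam * deriv w v))
        = fun v => Real.cosh (F v) / Real.sinh (F v) := funext heq
    rw [hfun]
    exact this
  have E := hg.unique hh
  have hc : -(deriv x u * w u) * Real.sinh (F u)
      = Real.cosh (F u) * (lam * deriv w u) :=
    (div_eq_div_iff hden (hsinh u)).mp (heq u)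
  have E2 := (div_eq_div_iff (pow_ne_zero 2 hden) (pow_ne_zero 2 (hsinh u))).mp E
  set A := deriv x u with hA
  set B := deriv (deriv x) u with hB
  set W := w u with hW
  set W1 := deriv w u with hW1
  set W2 := deriv (deriv w) u with hW2
  set Fp := deriv F u with hFp
  set s := Real.sinh (F u) with hs
  set c := Real.cosh (F u) with hcc
  have h1 : c ^ 2 - s ^ 2 = 1 := Real.cosh_sq_sub_sinh_sq (F u)
  have hcsq : c ^ 2 * (lam * W1) ^ 2 = A ^ 2 * W ^ 2 * s ^ 2 := by
    linear_combination (A * W * s - c * (lam * W1)) * hc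
  have hs2 : s ^ 2 * (A ^ 2 * W ^ 2 - lam ^ 2 * W1 ^ 2) = lam ^ 2 * W1 ^ 2 := by
    linear_combination (lam * W1) ^ 2 * h1 - hcsq
  have eq1 : lam * ((B * W + A * W1) * W1 - A * W * W2) * s ^ 2
      = Fp * lam ^ 2 * W1 ^ 2 := by
    linear_combination (-1 : ℝ) * E2 + Fp * lam ^ 2 * W1 ^ 2 * h1
  have eq2 : lam ^ 3 * W1 ^ 2 * ((B * W + A * W1) * W1 - A * W * W2)
      = Fp * lam ^ 2 * W1 ^ 2 * (A ^ 2 * W ^ 2 - lam ^ 2 * W1 ^ 2) := by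
    linear_combination (A ^ 2 * W ^ 2 - lam ^ 2 * W1 ^ 2) * eq1
      - lam * ((B * W + A * W1) * W1 - A * W * W2) * hs2
  have hfp : Fp * (lam ^ 2 + W ^ 2) = lam * A := by
    rw [hFp, hF' u]
    field_simp
    rw [hA, hW]; ring
  have hW2ne : lam ^ 2 + W ^ 2 ≠ 0 := by positivity
  have heq3 : lam ^ 3 * W1 ^ 2 * (((B * W + A * W1) * W1 - A * W * W2) * (lam ^ 2 + W ^ 2))
      = lam ^ 3 * W1 ^ 2 * (A * (A ^ 2 * W ^ 2 - lam ^ 2 * W1 ^ 2)) := by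
    linear_combination (lam ^ 2 + W ^ 2) * eq2
      + lam ^ 2 * W1 ^ 2 * (A ^ 2 * W ^ 2 - lam ^ 2 * W1 ^ 2) * hfp
  have key := mul_left_cancel₀ (mul_ne_zero (pow_ne_zero 3 hlam0) (pow_ne_zero 2 (hw' u)) : lam ^ 3 * W1 ^ 2 ≠ 0) heq3
  linear_combination key
end
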